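/- Suppose C ∈ ℂ^{m×N} satisfies the ℓ2-robust null space property of order s with constants 0 < ρ < 1 and τ > 0. Let x ∈ ℂ^N, e ∈ ℂ^m with ‖e‖₂ ≤ η, y = Cx + e, and let x̃ be any minimizer of ‖z‖₁ subject to ‖Cz − y‖₂ ≤ η. Then ‖x − x̃‖₁ ≤ (2(1+ρ)/(1−ρ)) · inf_{‖z‖₀ ≤ s} ‖x − z‖₁ + (4τ/(1−ρ)) · η. -/
import Mathlib

noncomputable def l1 {n : ℕ} (x : Fin n → ℂ) : ℝ := ∑ i, ‖x i‖
noncomputable def l2 {n : ℕ} (x : Fin n → ℂ) : ℝ := Real.sqrt (∑ i, ‖x i‖ ^ 2)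
def restr {n : ℕ} (x : Fin n → ℂ) (S : Finset (Fin n)) : Fin n → ℂ :=
  fun i => if i ∈ S then x i else 0
noncomputable def spar {n : ℕ} (x : Fin n → ℂ) : ℕ := (Function.support x).ncard

def RNSP {m N : ℕ} (C : Matrix (Fin m) (Fin N) ℂ) (s : ℕ) (ρ τ : ℝ) : Prop :=
  ∀ (x : Fin N → ℂ) (S : Finset (Fin N)), S.card ≤ s →
    l1 (restr x S) ≤ ρ * l1 (restr x Sᶜ) + τ * l2 (C.mulVec x)

lemma l1_nonneg {n : ℕ} (x : Fin n → ℂ) : 0 ≤ l1 x :=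
  Finset.sum_nonneg fun _ _ => norm_nonneg _

lemma l1_split {n : ℕ} (x : Fin n → ℂ) (S : Finset (Fin n)) :
    l1 x = l1 (restr x S) + l1 (restr x Sᶜ) := by
  unfold l1 restr
  rw [← Finset.sum_add_distrib]
  refine Finset.sum_congr rfl fun i _ => ?_
  by_cases hi : i ∈ S <;> simp [hi]

lemma restr_sub {n : ℕ} (a b : Fin n → ℂ) (S : Finset (Fin n)) :
    restr (a - b) S = restr a S - restr b S := by
  funext i
  by_cases hi : i ∈ S <;> simp [restr, hi]

lemma l1_neg {n : ℕ} (a : Fin n → ℂ) : l1 (-a) = l1 a := by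
  unfold l1; simp

lemma l1_sub_l1_le {n : ℕ} (a b : Fin n → ℂ) : l1 a - l1 b ≤ l1 (a - b) := by
  unfold l1
  rw [← Finset.sum_sub_distrib]
  exact Finset.sum_le_sum fun i _ => norm_sub_norm_le _ _

lemma l2_eq_norm {n : ℕ} (x : Fin n → ℂ) :
    l2 x = ‖(WithLp.equiv 2 (Fin n → ℂ)).symm x‖ := by
  rw [EuclideanSpace.norm_eq]; rfl

lemma l2_add_le {n : ℕ} (a b : Fin n → ℂ) : l2 (a + b) ≤ l2 a + l2 b := by
  simp only [l2_eq_norm]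
  exact (norm_add_le _ _)

lemma l2_neg {n : ℕ} (a : Fin n → ℂ) : l2 (-a) = l2 a := by
  simp only [l2_eq_norm]
  exact norm_neg _

theorem stmt11 {m N s : ℕ} (C : Matrix (Fin m) (Fin N) ℂ) (ρ τ η : ℝ)
    (hρ0 : 0 < ρ) (hρ1 : ρ < 1) (hτ : 0 < τ) (hη : 0 ≤ η) (h : RNSP C s ρ τ)
    (x xt : Fin N → ℂ) (e : Fin m → ℂ) (he : l2 e ≤ η)
    (y : Fin m → ℂ) (hy : y = C.mulVec x + e)
    (hfeas : l2 (C.mulVec xt - y) ≤ η)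
    (hmin : ∀ z : Fin N → ℂ, l2 (C.mulVec z - y) ≤ η → l1 xt ≤ l1 z) :
    l1 (x - xt) ≤
      (2 * (1 + ρ) / (1 - ρ)) *
        sInf {r : ℝ | ∃ z : Fin N → ℂ, spar z ≤ s ∧ r = l1 (x - z)} +
      (4 * τ / (1 - ρ)) * η := by
  have hρ : (0:ℝ) < 1 - ρ := by linarith
  set v := x - xt with hv
  -- x is feasible, so l1 xt ≤ l1 x
  have hxfeas : l2 (C.mulVec x - y) ≤ η := by
    have : C.mulVec x - y = -e := by rw [hy]; abel
    rw [this, l2_neg]; exact he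
  have hle : l1 xt ≤ l1 x := hmin x hxfeas
  -- bound on l2 (C v)
  have hCv : l2 (C.mulVec v) ≤ 2 * η := by
    have h2 : C.mulVec v = -(C.mulVec xt - y) + -e := by
      rw [hv, Matrix.mulVec_sub, hy]; funext i; simp [Pi.sub_apply]; ring
    calc l2 (C.mulVec v) = l2 (-(C.mulVec xt - y) + -e) := by rw [h2]
      _ ≤ l2 (-(C.mulVec xt - y)) + l2 (-e) := l2_add_le _ _
      _ = l2 (C.mulVec xt - y) + l2 e := by rw [l2_neg, l2_neg]
      _ ≤ η + η := add_le_add hfeas he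
      _ = 2 * η := by ring
  -- key bound for any S with card ≤ s
  have key : ∀ S : Finset (Fin N), S.card ≤ s →
      l1 v ≤ (2 * (1 + ρ) / (1 - ρ)) * l1 (restr x Sᶜ) + (4 * τ / (1 - ρ)) * η := by
    intro S hS
    have hnsp := h v S hS
    -- l1 (restr v Sᶜ) ≤ l1 xt - l1 x + 2 * l1 (restr x Sᶜ) + l1 (restr v S)
    have hA : l1 (restr x S) - l1 (restr v S) ≤ l1 (restr xt S) := by
      have : restr xt S = restr x S - restr v S := by
        rw [← restr_sub]; congr 1; rw [hv, sub_sub_cancel]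
      rw [this]; exact l1_sub_l1_le _ _
    have hB : l1 (restr v Sᶜ) - l1 (restr x Sᶜ) ≤ l1 (restr xt Sᶜ) := by
      have : restr xt Sᶜ = restr x Sᶜ - restr v Sᶜ := by
        rw [← restr_sub]; congr 1; rw [hv, sub_sub_cancel]
      rw [this]
      have := l1_sub_l1_le (restr v Sᶜ) (restr x Sᶜ)
      have heq : restr v Sᶜ - restr x Sᶜ = -(restr x Sᶜ - restr v Sᶜ) := by abel
      calc l1 (restr v Sᶜ) - l1 (restr x Sᶜ) ≤ l1 (restr v Sᶜ - restr x Sᶜ) := this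
        _ = l1 (restr x Sᶜ - restr v Sᶜ) := by rw [heq, l1_neg]
    have hsplitx : l1 x = l1 (restr x S) + l1 (restr x Sᶜ) := l1_split x S
    have hsplitxt : l1 xt = l1 (restr xt S) + l1 (restr xt Sᶜ) := l1_split xt S
    have hsplitv : l1 v = l1 (restr v S) + l1 (restr v Sᶜ) := l1_split v S
    -- from hA, hB, hle:
    have hC : l1 (restr v Sᶜ) ≤ l1 xt - l1 x + 2 * l1 (restr x Sᶜ) + l1 (restr v S) := by
      linarith
    have hD : l1 (restr v Sᶜ) ≤ 2 * l1 (restr x Sᶜ) + ρ * l1 (restr v Sᶜ) + τ * l2 (C.mulVec v) := by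
      linarith
    have hE : l1 (restr v Sᶜ) ≤ (2 * l1 (restr x Sᶜ) + τ * l2 (C.mulVec v)) / (1 - ρ) := by
      rw [le_div_iff₀ hρ]; nlinarith
    have hF : l1 v ≤ (1 + ρ) * l1 (restr v Sᶜ) + τ * l2 (C.mulVec v) := by
      linarith
    have hCv' : l2 (C.mulVec v) ≤ 2 * η := hCv
    have h1ρ : (0:ℝ) < 1 + ρ := by linarith
    calc l1 v ≤ (1 + ρ) * ((2 * l1 (restr x Sᶜ) + τ * l2 (C.mulVec v)) / (1 - ρ)) + τ * l2 (C.mulVec v) := by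
          nlinarith [hE, hF]
      _ = (2 * (1 + ρ) / (1 - ρ)) * l1 (restr x Sᶜ) + (2 * τ / (1 - ρ)) * l2 (C.mulVec v) := by
          field_simp; ring
      _ ≤ (2 * (1 + ρ) / (1 - ρ)) * l1 (restr x Sᶜ) + (2 * τ / (1 - ρ)) * (2 * η) := by
          have : (0:ℝ) < 2 * τ / (1 - ρ) := by positivity
          nlinarith
      _ = (2 * (1 + ρ) / (1 - ρ)) * l1 (restr x Sᶜ) + (4 * τ / (1 - ρ)) * η := by ring
  -- for any sparse z, the bound holds with l1 (x - z)
  have keyz : ∀ z : Fin N → ℂ, spar z ≤ s →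
      l1 v ≤ (2 * (1 + ρ) / (1 - ρ)) * l1 (x - z) + (4 * τ / (1 - ρ)) * η := by
    intro z hz
    have hfin : (Function.support z).Finite := Set.toFinite _
    set S : Finset (Fin N) := hfin.toFinset with hSdef
    have hScard : S.card ≤ s := by
      have h1 : (Function.support z).ncard = S.card :=
        Set.ncard_eq_toFinset_card _ hfin
      unfold spar at hz; omega
    have hrestr : l1 (restr x Sᶜ) ≤ l1 (x - z) := by
      unfold l1 restr
      refine Finset.sum_le_sum fun i _ => ?_
      by_cases hi : i ∈ Sᶜ
      · simp only [hi, if_pos]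
        have hzi : z i = 0 := by
          have : i ∉ Function.support z := by
            simpa [hSdef, Set.Finite.mem_toFinset] using Finset.mem_compl.mp hi
          simpa [Function.mem_support, not_not] using this
        simp [Pi.sub_apply, hzi]
      · simp only [hi, if_neg, not_false_iff, norm_zero]
        exact norm_nonneg _
    have := key S hScard
    have hc : (0:ℝ) ≤ 2 * (1 + ρ) / (1 - ρ) := by positivity
    nlinarith
  -- conclude via sInf
  set T := {r : ℝ | ∃ z : Fin N → ℂ, spar z ≤ s ∧ r = l1 (x - z)} with hT
  have hne : T.Nonempty := ⟨l1 (x - 0), 0, by simp [spar], rfl⟩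
  have hc : (0:ℝ) < 2 * (1 + ρ) / (1 - ρ) := by positivity
  have hlb : (l1 v - (4 * τ / (1 - ρ)) * η) / (2 * (1 + ρ) / (1 - ρ)) ≤ sInf T := by
    apply le_csInf hne
    intro r hr
    obtain ⟨z, hz, rfl⟩ := hr
    rw [div_le_iff₀ hc]
    have := keyz z hz
    nlinarith
  have := (div_le_iff₀ hc).mp hlb
  linarith [mul_comm (sInf T) (2 * (1 + ρ) / (1 - ρ))]
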